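/- For every α ∈ [1,∞) and every η ∈ (0,1) with η ≠ 1/2, the conditional risk f ↦ η·l̃^α(f) + (1-η)·l̃^α(-f) has a unique global minimizer over ℝ, given by f*(α,η) = α·log(η/(1-η)). In particular, sign(f*(α,η)) = sign(2η - 1). -/

import Mathlib

/-!
Both branches of the loss have derivative `l̃^α'(z) = -σ(z)^{1-1/α} σ(-z)`. Using
`σ(z) = e^z σ(-z)`, the derivative of the conditional risk factors as
`σ(f)^{1-1/α} σ(-f) · ((1-η) e^{f/α} - η)`: a positive weight times a strictly increasing
function vanishing exactly at `f* = α log(η/(1-η))`. So the risk strictly decreases before `f*`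
and strictly increases after it, which the mean value theorem turns into strict minimality.
The sign of `f*` is that of `log(η/(1-η))`, i.e. of `2η - 1`.
-/

/-- The sigmoid function `σ(z) = 1/(1+e^{-z})`. -/
noncomputable def sigmoid (z : ℝ) : ℝ := 1 / (1 + Real.exp (-z))

/-- The margin `α`-loss for finite `α ∈ [1,∞)`:
`l̃^1(z) = -log σ(z)` and `l̃^α(z) = (α/(α-1))·(1 - σ(z)^{1-1/α})` for `α > 1`. -/
noncomputable def margAlphaLoss (α : ℝ) (z : ℝ) : ℝ :=
  if α = 1 then -Real.log (sigmoid z)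
  else (α / (α - 1)) * (1 - sigmoid z ^ (1 - 1/α))

theorem sigmoid_eq_real_sigmoid : sigmoid = Real.sigmoid := by
  funext z
  rw [sigmoid, Real.sigmoid_def, one_div]

/-- For `α = 1` the exponent `1 - 1/α` vanishes, so one formula covers both branches. -/
theorem hasDerivAt_margAlphaLoss {α : ℝ} (hα : α ≠ 0) (z : ℝ) :
    HasDerivAt (margAlphaLoss α)
      (-(Real.sigmoid z ^ (1 - 1 / α) * Real.sigmoid (-z))) z := by
  have hσ := Real.sigmoid_pos z
  by_cases h1 : α = 1
  · subst h1
    have hL : margAlphaLoss 1 = fun z => -Real.log (Real.sigmoid z) := by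
      funext w; simp [margAlphaLoss, sigmoid_eq_real_sigmoid]
    rw [hL]
    refine ((Real.hasDerivAt_sigmoid z).log hσ.ne').neg.congr_deriv ?_
    rw [Real.sigmoid_neg]
    field_simp
    simp
  · have hL : margAlphaLoss α = fun z => α / (α - 1) * (1 - Real.sigmoid z ^ (1 - 1 / α)) := by
      funext w; simp [margAlphaLoss, h1, sigmoid_eq_real_sigmoid]
    rw [hL]
    refine ((((Real.hasDerivAt_sigmoid z).rpow_const (p := 1 - 1 / α)
      (Or.inl hσ.ne')).const_sub 1).const_mul (α / (α - 1))).congr_deriv ?_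
    have : α - 1 ≠ 0 := sub_ne_zero.2 h1
    rw [← Real.sigmoid_neg, Real.rpow_sub_one hσ.ne']
    field_simp

theorem sigmoid_neg_rpow_mul_sigmoid (q f : ℝ) :
    Real.sigmoid (-f) ^ (1 - q) * Real.sigmoid f
      = Real.sigmoid f ^ (1 - q) * Real.sigmoid (-f) * Real.exp (q * f) := by
  have hsig : Real.sigmoid f = Real.exp f * Real.sigmoid (-f) := by
    rw [← Real.sigmoid_mul_rexp_neg, mul_left_comm, ← Real.exp_add, add_neg_cancel,
      Real.exp_zero, mul_one]
  rw [hsig, Real.mul_rpow (Real.exp_pos f).le (Real.sigmoid_pos (-f)).le, ← Real.exp_mul]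
  have hexp : Real.exp f = Real.exp (f * (1 - q)) * Real.exp (q * f) := by
    rw [← Real.exp_add]; ring_nf
  rw [hexp]
  ring

theorem apply_lt_apply_of_hasDerivAt_neg_of_pos {g g' : ℝ → ℝ} {a x : ℝ}
    (hg : ∀ y, HasDerivAt g (g' y) y) (hneg : ∀ y < a, g' y < 0)
    (hpos : ∀ y, a < y → 0 < g' y) (hx : x ≠ a) : g a < g x := by
  have hcont : Continuous g := continuous_iff_continuousAt.2 fun y => (hg y).continuousAt
  rcases hx.lt_or_gt with hxa | hax
  · obtain ⟨c, hc, hslope⟩ :=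
      exists_hasDerivAt_eq_slope g g' hxa hcont.continuousOn fun y _ => hg y
    have := hneg c hc.2
    rw [hslope, div_neg_iff] at this
    rcases this with ⟨-, h⟩ | ⟨h, -⟩ <;> linarith
  · obtain ⟨c, hc, hslope⟩ :=
      exists_hasDerivAt_eq_slope g g' hax hcont.continuousOn fun y _ => hg y
    have := hpos c hc.1
    rw [hslope, div_pos_iff] at this
    rcases this with ⟨h, -⟩ | ⟨-, h⟩ <;> linarith

/-- The conditional risk `C_η^α(f)`. -/
noncomputable def condRisk (α η f : ℝ) : ℝ :=
  η * margAlphaLoss α f + (1 - η) * margAlphaLoss α (-f)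

theorem hasDerivAt_condRisk {α : ℝ} (hα : α ≠ 0) (η f : ℝ) :
    HasDerivAt (condRisk α η)
      (Real.sigmoid f ^ (1 - 1 / α) * Real.sigmoid (-f) * ((1 - η) * Real.exp (f / α) - η))
      f := by
  have hneg := (hasDerivAt_margAlphaLoss hα (-f)).comp f (hasDerivAt_neg f)
  refine (((hasDerivAt_margAlphaLoss hα f).const_mul η).add
    (hneg.const_mul (1 - η))).congr_deriv ?_
  rw [neg_neg, sigmoid_neg_rpow_mul_sigmoid, one_div_mul_eq_div]
  ring

theorem strictMono_one_sub_mul_exp_div_sub {α η : ℝ} (hα : 0 < α) (hη : η < 1) :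
    StrictMono fun f => (1 - η) * Real.exp (f / α) - η := fun x y hxy => by
  have := sub_pos.2 hη
  dsimp only
  gcongr

theorem one_sub_mul_exp_div_sub_eq_zero {α η : ℝ} (hα : α ≠ 0) (hη : η ∈ Set.Ioo 0 1) :
    (1 - η) * Real.exp (α * Real.log (η / (1 - η)) / α) - η = 0 := by
  have : 0 < 1 - η := sub_pos.2 hη.2
  rw [mul_div_cancel_left₀ _ hα, Real.exp_log (div_pos hη.1 this)]
  field_simp
  ring

theorem sign_mul_log_div_one_sub {α η : ℝ} (hα : 0 < α) (hη : η ∈ Set.Ioo 0 1) :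
    Real.sign (α * Real.log (η / (1 - η))) = Real.sign (2 * η - 1) := by
  obtain ⟨hη0, hη1⟩ := hη
  have h1η : 0 < 1 - η := by linarith
  rcases lt_trichotomy η (1 / 2) with h | rfl | h
  · have : Real.log (η / (1 - η)) < 0 :=
      Real.log_neg (by positivity) (by rw [div_lt_one h1η]; linarith)
    rw [Real.sign_of_neg (mul_neg_of_pos_of_neg hα this), Real.sign_of_neg (by linarith)]
  · norm_num
  · have : 0 < Real.log (η / (1 - η)) := Real.log_pos (by rw [one_lt_div h1η]; linarith)
    rw [Real.sign_of_pos (mul_pos hα this), Real.sign_of_pos (by linarith)]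

theorem margAlphaLoss_unique_minimizer_general
    (α : ℝ) (hα : 1 ≤ α) (η : ℝ) (hη : η ∈ Set.Ioo (0:ℝ) 1) :
    (∀ f : ℝ, f ≠ α * Real.log (η / (1 - η)) →
      η * margAlphaLoss α (α * Real.log (η / (1 - η)))
        + (1 - η) * margAlphaLoss α (-(α * Real.log (η / (1 - η))))
      < η * margAlphaLoss α f + (1 - η) * margAlphaLoss α (-f)) ∧
    Real.sign (α * Real.log (η / (1 - η))) = Real.sign (2 * η - 1) := by
  have hα0 : 0 < α := by linarith
  have hfactor := strictMono_one_sub_mul_exp_div_sub hα0 hη.2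
  have hzero := one_sub_mul_exp_div_sub_eq_zero hα0.ne' hη
  have hweight (y : ℝ) : 0 < Real.sigmoid y ^ (1 - 1 / α) * Real.sigmoid (-y) :=
    mul_pos (Real.rpow_pos_of_pos (Real.sigmoid_pos y) _) (Real.sigmoid_pos (-y))
  refine ⟨fun f hf => apply_lt_apply_of_hasDerivAt_neg_of_pos (hasDerivAt_condRisk hα0.ne' η)
    (fun y hy => ?_) (fun y hy => ?_) hf, sign_mul_log_div_one_sub hα0 hη⟩
  · exact mul_neg_of_pos_of_neg (hweight y) (hzero ▸ hfactor hy)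
  · exact mul_pos (hweight y) (hzero ▸ hfactor hy)

/-- For every `α ∈ [1,∞)` and `η ∈ (0,1)` with `η ≠ 1/2`, the conditional risk
`f ↦ η·l̃^α(f) + (1-η)·l̃^α(-f)` has the unique global minimizer
`f*(α,η) = α·log(η/(1-η))` over `ℝ`; in particular `sign f* = sign (2η-1)`. -/
theorem margAlphaLoss_unique_minimizer
    (α : ℝ) (hα : 1 ≤ α) (η : ℝ) (hη : η ∈ Set.Ioo (0:ℝ) 1) (hne : η ≠ 1/2) :
    (∀ f : ℝ, f ≠ α * Real.log (η / (1 - η)) →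
      η * margAlphaLoss α (α * Real.log (η / (1 - η)))
        + (1 - η) * margAlphaLoss α (-(α * Real.log (η / (1 - η))))
      < η * margAlphaLoss α f + (1 - η) * margAlphaLoss α (-f)) ∧
    Real.sign (α * Real.log (η / (1 - η))) = Real.sign (2 * η - 1) :=
  margAlphaLoss_unique_minimizer_general α hα η hη
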